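/- In the Lie superalgebra g of symmetries of the SUSY Gauss–Codazzi equations, the subspaces g₁' = span{K₁, P₊, J₊}, g₂' = span{K₂, P₋, J₋}, and h = span{K₀, C₀, W} are ideals, and g decomposes as the direct sum g = g₁' ⊕ g₂' ⊕ h; moreover within g₁', span{P₊, J₊} is an ideal on which K₁ acts, so g₁' = ℂK₁ ⋉ span{P₊, J₊}. -/
import Mathlib


/-- Coordinates on the nine-dimensional symmetry superalgebra with even basis
`K₁ (0), P₊ (1), K₂ (2), P₋ (3), K₀ (4), C₀ (5)` and odd basis `J₊ (6), J₋ (7), W (8)`. -/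
abbrev GCSuper : Type := Fin 9 → ℂ

/-- The bracket determined by the nonzero structure relations
`[K₁,P₊] = 2P₊`, `[K₁,J₊] = J₊`, `{J₊,J₊} = 2iP₊`, `[K₂,P₋] = 2P₋`, `[K₂,J₋] = J₋`,
`{J₋,J₋} = 2iP₋`, `[K₀,W] = W`, `[C₀,W] = −W`. -/
noncomputable def gcBracket (x y : GCSuper) : GCSuper := fun k =>
  if k = 1 then 2 * (x 0 * y 1 - x 1 * y 0) + 2 * Complex.I * (x 6 * y 6)
  else if k = 3 then 2 * (x 2 * y 3 - x 3 * y 2) + 2 * Complex.I * (x 7 * y 7)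
  else if k = 6 then x 0 * y 6 - x 6 * y 0
  else if k = 7 then x 2 * y 7 - x 7 * y 2
  else if k = 8 then (x 4 * y 8 - x 8 * y 4) - (x 5 * y 8 - x 8 * y 5)
  else 0

/-- basis vectors -/
noncomputable def gcE (a : Fin 9) : GCSuper := Pi.single a 1

/-- the sign `(−1)^{|a||b|}` for basis elements: `−1` iff both indices are odd
(i.e. both `≥ 6`). -/
noncomputable def gcSgn (a b : Fin 9) : ℂ := if 6 ≤ (a : ℕ) ∧ 6 ≤ (b : ℕ) then -1 else 1

/-- The submodule of elements supported on a finite coordinate set `S`. -/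
noncomputable def gcM (S : Finset (Fin 9)) : Submodule ℂ GCSuper where
  carrier := {x | ∀ k ∉ S, x k = 0}
  add_mem' := by intro a b ha hb k hk; simp [ha k hk, hb k hk]
  zero_mem' := by intro k hk; rfl
  smul_mem' := by intro c x hx k hk; simp [hx k hk]

lemma gcM_mem {S : Finset (Fin 9)} {x : GCSuper} :
    x ∈ gcM S ↔ ∀ k ∉ S, x k = 0 := Iff.rfl

lemma gc_span_eq (S : Finset (Fin 9)) :
    Submodule.span ℂ (gcE '' (S : Set (Fin 9))) = gcM S := by
  apply le_antisymm
  · rw [Submodule.span_le]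
    rintro _ ⟨a, ha, rfl⟩ k hk
    have hne : k ≠ a := fun h => hk (h ▸ ha)
    simp [gcE, Pi.single_apply, hne]
  · intro x hx
    have hx' : x = ∑ i ∈ S, x i • gcE i := by
      funext k
      rw [Finset.sum_apply]
      by_cases hk : k ∈ S
      · rw [Finset.sum_eq_single k]
        · simp [gcE]
        · intro b _ hbk
          simp [gcE, Pi.single_apply, Ne.symm hbk]
        · intro h; exact absurd hk h
      · rw [hx k hk, Finset.sum_eq_zero]
        intro b hb
        have hne : k ≠ b := fun h => hk (h ▸ hb)
        simp [gcE, Pi.single_apply, hne]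
    rw [hx']
    exact Submodule.sum_mem _ fun i hi => Submodule.smul_mem _ _
      (Submodule.subset_span ⟨i, hi, rfl⟩)

lemma gc_span3 (a b c : Fin 9) :
    Submodule.span ℂ ({gcE a, gcE b, gcE c} : Set GCSuper) = gcM {a, b, c} := by
  rw [← gc_span_eq]; congr 1; simp [Set.image_insert_eq]

lemma gc_span2 (a b : Fin 9) :
    Submodule.span ℂ ({gcE a, gcE b} : Set GCSuper) = gcM {a, b} := by
  rw [← gc_span_eq]; congr 1; simp [Set.image_insert_eq]

lemma gc_span1 (a : Fin 9) :
    Submodule.span ℂ ({gcE a} : Set GCSuper) = gcM {a} := by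
  rw [← gc_span_eq]; congr 1; simp

lemma gcM_mono {S T : Finset (Fin 9)} (h : S ⊆ T) : gcM S ≤ gcM T :=
  fun x hx k hk => hx k (fun hks => hk (h hks))

lemma gcM_sup (S T : Finset (Fin 9)) : gcM S ⊔ gcM T = gcM (S ∪ T) := by
  apply le_antisymm
  · exact sup_le (gcM_mono Finset.subset_union_left) (gcM_mono Finset.subset_union_right)
  · intro x hx
    rw [Submodule.mem_sup]
    refine ⟨fun k => if k ∈ S then x k else 0, fun k hk => by simp [hk],
      fun k => if k ∈ S then 0 else x k, ?_, ?_⟩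
    · intro k hk
      by_cases hks : k ∈ S
      · simp [hks]
      · simp only [hks, if_false]
        exact hx k (by simp [hks, hk])
    · funext k
      by_cases hks : k ∈ S <;> simp [hks]

lemma gcM_inf (S T : Finset (Fin 9)) : gcM S ⊓ gcM T = gcM (S ∩ T) := by
  apply le_antisymm
  · rintro x ⟨hxS, hxT⟩ k hk
    rw [Finset.mem_inter] at hk
    by_cases hks : k ∈ S
    · exact hxT k fun hkt => hk ⟨hks, hkt⟩
    · exact hxS k hks
  · exact le_inf (gcM_mono Finset.inter_subset_left) (gcM_mono Finset.inter_subset_right)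

lemma gcM_empty : gcM (∅ : Finset (Fin 9)) = ⊥ := by
  apply le_antisymm
  · intro x hx
    have : x = 0 := funext fun k => hx k (Finset.notMem_empty k)
    simp [this]
  · exact bot_le

lemma gcM_univ : gcM (Finset.univ : Finset (Fin 9)) = ⊤ := by
  apply le_antisymm le_top
  intro x _ k hk
  exact absurd (Finset.mem_univ k) hk

/-- In the symmetry superalgebra `g` of the SUSY Gauss–Codazzi equations, the subspaces
`g₁' = span{K₁,P₊,J₊}`, `g₂' = span{K₂,P₋,J₋}` and `h = span{K₀,C₀,W}` are ideals and
`g = g₁' ⊕ g₂' ⊕ h`; moreover `span{P₊,J₊}` is an ideal of `g₁'`, so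
`g₁' = ℂK₁ ⋉ span{P₊,J₊}`. -/
theorem gcSuper_decomposition :
    (∀ x : GCSuper, ∀ y ∈ Submodule.span ℂ ({gcE 0, gcE 1, gcE 6} : Set GCSuper),
      gcBracket x y ∈ Submodule.span ℂ ({gcE 0, gcE 1, gcE 6} : Set GCSuper)) ∧
    (∀ x : GCSuper, ∀ y ∈ Submodule.span ℂ ({gcE 2, gcE 3, gcE 7} : Set GCSuper),
      gcBracket x y ∈ Submodule.span ℂ ({gcE 2, gcE 3, gcE 7} : Set GCSuper)) ∧
    (∀ x : GCSuper, ∀ y ∈ Submodule.span ℂ ({gcE 4, gcE 5, gcE 8} : Set GCSuper),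
      gcBracket x y ∈ Submodule.span ℂ ({gcE 4, gcE 5, gcE 8} : Set GCSuper)) ∧
    (Submodule.span ℂ ({gcE 0, gcE 1, gcE 6} : Set GCSuper) ⊔
       Submodule.span ℂ ({gcE 2, gcE 3, gcE 7} : Set GCSuper) ⊔
       Submodule.span ℂ ({gcE 4, gcE 5, gcE 8} : Set GCSuper) = ⊤) ∧
    (Submodule.span ℂ ({gcE 0, gcE 1, gcE 6} : Set GCSuper) ⊓
       (Submodule.span ℂ ({gcE 2, gcE 3, gcE 7} : Set GCSuper) ⊔
        Submodule.span ℂ ({gcE 4, gcE 5, gcE 8} : Set GCSuper)) = ⊥) ∧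
    (Submodule.span ℂ ({gcE 2, gcE 3, gcE 7} : Set GCSuper) ⊓
       (Submodule.span ℂ ({gcE 0, gcE 1, gcE 6} : Set GCSuper) ⊔
        Submodule.span ℂ ({gcE 4, gcE 5, gcE 8} : Set GCSuper)) = ⊥) ∧
    (Submodule.span ℂ ({gcE 4, gcE 5, gcE 8} : Set GCSuper) ⊓
       (Submodule.span ℂ ({gcE 0, gcE 1, gcE 6} : Set GCSuper) ⊔
        Submodule.span ℂ ({gcE 2, gcE 3, gcE 7} : Set GCSuper)) = ⊥) ∧
    (∀ x ∈ Submodule.span ℂ ({gcE 0, gcE 1, gcE 6} : Set GCSuper),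
      ∀ y ∈ Submodule.span ℂ ({gcE 1, gcE 6} : Set GCSuper),
        gcBracket x y ∈ Submodule.span ℂ ({gcE 1, gcE 6} : Set GCSuper)) ∧
    (Submodule.span ℂ ({gcE 0} : Set GCSuper) ⊔
       Submodule.span ℂ ({gcE 1, gcE 6} : Set GCSuper) =
     Submodule.span ℂ ({gcE 0, gcE 1, gcE 6} : Set GCSuper)) ∧
    (Submodule.span ℂ ({gcE 0} : Set GCSuper) ⊓
       Submodule.span ℂ ({gcE 1, gcE 6} : Set GCSuper) = ⊥) := by
  simp only [gc_span3, gc_span2, gc_span1, gcM_sup, gcM_inf]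
  refine ⟨?_, ?_, ?_, ?_, ?_, ?_, ?_, ?_, ?_, ?_⟩
  · intro x y hy k hk
    have h2 : y 2 = 0 := hy 2 (by decide)
    have h3 : y 3 = 0 := hy 3 (by decide)
    have h4 : y 4 = 0 := hy 4 (by decide)
    have h5 : y 5 = 0 := hy 5 (by decide)
    have h7 : y 7 = 0 := hy 7 (by decide)
    have h8 : y 8 = 0 := hy 8 (by decide)
    fin_cases k <;> simp_all [gcBracket]
  · intro x y hy k hk
    have h0 : y 0 = 0 := hy 0 (by decide)
    have h1 : y 1 = 0 := hy 1 (by decide)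
    have h4 : y 4 = 0 := hy 4 (by decide)
    have h5 : y 5 = 0 := hy 5 (by decide)
    have h6 : y 6 = 0 := hy 6 (by decide)
    have h8 : y 8 = 0 := hy 8 (by decide)
    fin_cases k <;> simp_all [gcBracket]
  · intro x y hy k hk
    have h0 : y 0 = 0 := hy 0 (by decide)
    have h1 : y 1 = 0 := hy 1 (by decide)
    have h2 : y 2 = 0 := hy 2 (by decide)
    have h3 : y 3 = 0 := hy 3 (by decide)
    have h6 : y 6 = 0 := hy 6 (by decide)
    have h7 : y 7 = 0 := hy 7 (by decide)
    fin_cases k <;> simp_all [gcBracket]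
  · rw [show ({0,1,6} ∪ {2,3,7} ∪ {4,5,8} : Finset (Fin 9)) = Finset.univ by decide]
    exact gcM_univ
  · rw [show ({0,1,6} ∩ ({2,3,7} ∪ {4,5,8}) : Finset (Fin 9)) = ∅ by decide]
    exact gcM_empty
  · rw [show ({2,3,7} ∩ ({0,1,6} ∪ {4,5,8}) : Finset (Fin 9)) = ∅ by decide]
    exact gcM_empty
  · rw [show ({4,5,8} ∩ ({0,1,6} ∪ {2,3,7}) : Finset (Fin 9)) = ∅ by decide]
    exact gcM_empty
  · intro x _ y hy k hk
    have h0 : y 0 = 0 := hy 0 (by decide)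
    have h2 : y 2 = 0 := hy 2 (by decide)
    have h3 : y 3 = 0 := hy 3 (by decide)
    have h4 : y 4 = 0 := hy 4 (by decide)
    have h5 : y 5 = 0 := hy 5 (by decide)
    have h7 : y 7 = 0 := hy 7 (by decide)
    have h8 : y 8 = 0 := hy 8 (by decide)
    fin_cases k <;> simp_all [gcBracket]
  · rw [show ({0} ∪ {1,6} : Finset (Fin 9)) = {0,1,6} by decide]
  · rw [show ({0} ∩ {1,6} : Finset (Fin 9)) = ∅ by decide]
    exact gcM_empty
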